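/- Let Q̄ ∈ ℝ^{d×r} and ω ≥ 0 satisfy ‖Q̄‖_max ≤ ω/√d. If rω² < 1/2, then ‖(I_r + Q̄ᵀQ̄)^{−1/2} − I_r‖_max ≤ rω² and ‖(I_r + Q̄ᵀQ̄)^{−1/2}‖_max ≤ 3/2, where (I_r + Q̄ᵀQ̄)^{−1/2} denotes the inverse of the positive-definite square root of I_r + Q̄ᵀQ̄. -/

import Mathlib

open Matrix BigOperators

/-- Entrywise max norm: largest absolute value of an entry. -/
noncomputable def matMaxNorm {m n : Type*} [Fintype m] [Fintype n] (M : Matrix m n ℝ) : ℝ :=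
  ⨆ i, ⨆ j, |M i j|

/-- Matrix ∞-norm: maximum absolute row sum. -/
noncomputable def matInfNorm {m n : Type*} [Fintype m] [Fintype n] (M : Matrix m n ℝ) : ℝ :=
  ⨆ i, ∑ j, |M i j|

/-- Matrix 1-norm: maximum absolute column sum. -/
noncomputable def matOneNorm {m n : Type*} [Fintype m] [Fintype n] (M : Matrix m n ℝ) : ℝ :=
  ⨆ j, ∑ i, |M i j|

/-- Euclidean norm of a vector. -/
noncomputable def vec2Norm {n : Type*} [Fintype n] (x : n → ℝ) : ℝ :=
  Real.sqrt (∑ i, (x i) ^ 2)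

/-- ℓ∞ norm of a vector. -/
noncomputable def vecSupNorm {n : Type*} [Fintype n] (x : n → ℝ) : ℝ :=
  ⨆ i, |x i|

/-- Spectral norm (operator 2-norm) of a matrix. -/
noncomputable def matSpecNorm {m n : Type*} [Fintype m] [Fintype n] (M : Matrix m n ℝ) : ℝ :=
  sSup {c : ℝ | ∃ x : n → ℝ, vec2Norm x ≤ 1 ∧ c = vec2Norm (M.mulVec x)}

/-- Coherence of a d × r matrix with orthonormal columns. -/
noncomputable def matCoherence {d r : ℕ} (V : Matrix (Fin d) (Fin r) ℝ) : ℝ :=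
  ((d : ℝ) / (r : ℝ)) * ⨆ i, ∑ j, (V i j) ^ 2

/-- Inverse of the positive semidefinite square root of a matrix (junk value otherwise). -/
noncomputable def matInvSqrt {n : Type*} [Fintype n] [DecidableEq n] (S : Matrix n n ℝ) :
    Matrix n n ℝ :=
  letI := Classical.propDecidable
  if h : S.PosSemidef then (h.1.eigenvectorUnitary.1 * diagonal ((↑) ∘ (√·) ∘ h.1.eigenvalues) *
    (star h.1.eigenvectorUnitary : Matrix n n ℝ))⁻¹ else 0

/-- Weighted max-norm for matrices with d₁ + d₂ rows. -/
noncomputable def wMaxNorm {d₁ d₂ : ℕ} {n : Type*} [Fintype n]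
    (M : Matrix (Fin d₁ ⊕ Fin d₂) n ℝ) : ℝ :=
  matMaxNorm (Matrix.of fun i j =>
    (Sum.elim (fun _ : Fin d₁ => Real.sqrt d₁) (fun _ : Fin d₂ => Real.sqrt d₂) i) * M i j)

/-- Huber loss with parameter α. -/
noncomputable def huberLoss (α x : ℝ) : ℝ := if |x| ≤ α then x ^ 2 else 2 * α * |x| - α ^ 2

/-!
Diagonalize `S = 1 + QᵀQ = U diag(μ) Uᵀ` with `U` orthogonal. Every eigenvalue satisfies
`μᵢ ≥ 1`, and `∑ (μᵢ - 1) = tr (QᵀQ) = ‖Q‖_F² ≤ d r (ω/√d)² = r ω²`, so each `μᵢ - 1 ≤ r ω²`.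
Then `S^{-1/2} - 1 = U diag(μᵢ^{-1/2} - 1) Uᵀ` with `|μᵢ^{-1/2} - 1| ≤ μᵢ - 1 ≤ r ω²`, and an
entry of `U diag(g) Uᵀ` is bounded by `max |gᵢ|` because the rows of `U` are unit vectors, so
`∑ₘ |U j m| |U k m| ≤ 1` by AM-GM. The bound `3/2` follows from `1 + r ω² < 3/2`.
-/

section MaxNorm

variable {m n : Type*} [Fintype m] [Fintype n]

lemma matMaxNorm_le {M : Matrix m n ℝ} {c : ℝ} (hc : 0 ≤ c) (h : ∀ i j, |M i j| ≤ c) :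
    matMaxNorm M ≤ c :=
  Real.iSup_le (fun i => Real.iSup_le (h i) hc) hc

lemma abs_le_matMaxNorm (M : Matrix m n ℝ) (i : m) (j : n) : |M i j| ≤ matMaxNorm M :=
  (le_ciSup (f := fun j => |M i j|) (Set.finite_range _).bddAbove j).trans
    (le_ciSup (f := fun i => ⨆ j, |M i j|) (Set.finite_range _).bddAbove i)

lemma matMaxNorm_nonneg (M : Matrix m n ℝ) : 0 ≤ matMaxNorm M :=
  Real.iSup_nonneg fun _ => Real.iSup_nonneg fun _ => abs_nonneg _

lemma matMaxNorm_add_le (M N : Matrix m n ℝ) :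
    matMaxNorm (M + N) ≤ matMaxNorm M + matMaxNorm N :=
  matMaxNorm_le (add_nonneg (matMaxNorm_nonneg M) (matMaxNorm_nonneg N)) fun i j =>
    (abs_add_le _ _).trans (add_le_add (abs_le_matMaxNorm M i j) (abs_le_matMaxNorm N i j))

lemma matMaxNorm_one_le [DecidableEq n] : matMaxNorm (1 : Matrix n n ℝ) ≤ 1 :=
  matMaxNorm_le zero_le_one fun i j => by
    by_cases h : i = j <;> simp [Matrix.one_apply, h]

lemma trace_transpose_mul_self_le (Q : Matrix m n ℝ) :
    (Qᵀ * Q).trace ≤ Fintype.card m * Fintype.card n * matMaxNorm Q ^ 2 := by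
  have hsq : ∀ i j, Q i j ^ 2 ≤ matMaxNorm Q ^ 2 := fun i j => by
    rw [← sq_abs]
    exact pow_le_pow_left₀ (abs_nonneg _) (abs_le_matMaxNorm Q i j) 2
  calc (Qᵀ * Q).trace = ∑ j, ∑ i, Q i j ^ 2 := by
        simp only [Matrix.trace, Matrix.diag, Matrix.mul_apply, Matrix.transpose_apply, sq]
    _ ≤ ∑ _j : n, ∑ _i : m, matMaxNorm Q ^ 2 :=
        Finset.sum_le_sum fun j _ => Finset.sum_le_sum fun i _ => hsq i j
    _ = _ := by simp only [Finset.sum_const, Finset.card_univ, nsmul_eq_mul]; ring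

lemma trace_transpose_mul_self_le_of_matMaxNorm_le {Q : Matrix m n ℝ} {ω : ℝ}
    (hQ : matMaxNorm Q ≤ ω / √(Fintype.card m)) : (Qᵀ * Q).trace ≤ Fintype.card n * ω ^ 2 := by
  set d : ℝ := (Fintype.card m : ℝ)
  have hd : d * (ω / √d) ^ 2 ≤ ω ^ 2 := by
    rcases (show (0 : ℝ) ≤ d by positivity).eq_or_lt with hd | hd
    · rw [← hd, zero_mul]
      exact sq_nonneg ω
    · rw [div_pow, Real.sq_sqrt hd.le, mul_div_cancel₀ _ hd.ne']
  calc (Qᵀ * Q).trace ≤ d * Fintype.card n * matMaxNorm Q ^ 2 := trace_transpose_mul_self_le Q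
    _ ≤ d * Fintype.card n * (ω / √d) ^ 2 := by gcongr; exact matMaxNorm_nonneg Q
    _ ≤ Fintype.card n * ω ^ 2 := by nlinarith [Nat.cast_nonneg (α := ℝ) (Fintype.card n)]

end MaxNorm

section Spectral

open scoped ComplexOrder

variable {𝕜 n : Type*} [RCLike 𝕜] [Fintype n] [DecidableEq n]

lemma Matrix.IsHermitian.one_le_eigenvalues {S : Matrix n n 𝕜} (hS : S.IsHermitian)
    (h : (S - 1).PosSemidef) (i : n) : 1 ≤ hS.eigenvalues i := by
  have hv : star ⇑(hS.eigenvectorBasis i) ⬝ᵥ ⇑(hS.eigenvectorBasis i) = 1 := by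
    rw [dotProduct_comm, ← EuclideanSpace.inner_eq_star_dotProduct, inner_self_eq_norm_sq_to_K,
      hS.eigenvectorBasis.orthonormal.1 i]
    simp
  have := h.dotProduct_mulVec_nonneg (hS.eigenvectorBasis i)
  rw [sub_mulVec, dotProduct_sub, one_mulVec, hv, RCLike.nonneg_iff] at this
  rw [hS.eigenvalues_eq i]
  simpa using this.1

lemma Matrix.IsHermitian.eigenvalues_sub_one_le_trace {S : Matrix n n 𝕜} (hS : S.IsHermitian)
    (h : (S - 1).PosSemidef) (i : n) : hS.eigenvalues i - 1 ≤ RCLike.re (S - 1).trace := by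
  have htr : RCLike.re (S - 1).trace = ∑ j, (hS.eigenvalues j - 1) := by
    simp [trace_sub, hS.trace_eq_sum_eigenvalues, Finset.sum_sub_distrib]
  rw [htr]
  exact Finset.single_le_sum (fun j _ => sub_nonneg.2 (hS.one_le_eigenvalues h j))
    (Finset.mem_univ i)

end Spectral

section Unitary

variable {n : Type*} [Fintype n] [DecidableEq n]

lemma sum_abs_mul_abs_le_one {U : Matrix n n ℝ} (hU : U ∈ unitaryGroup n ℝ) (j k : n) :
    ∑ m, |U j m| * |U k m| ≤ 1 := by
  have hrow : ∀ j, ∑ m, U j m ^ 2 = 1 := fun j => by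
    simpa [Matrix.mul_apply, Matrix.one_apply, sq] using
      congrFun (congrFun (mem_unitaryGroup_iff.mp hU) j) j
  have := Finset.sum_le_sum fun m (_ : m ∈ Finset.univ) => two_mul_le_add_sq |U j m| |U k m|
  simp only [sq_abs, Finset.sum_add_distrib, hrow, ← Finset.mul_sum, mul_assoc] at this
  linarith

lemma abs_mul_diagonal_mul_star_apply_le {U : Matrix n n ℝ} (hU : U ∈ unitaryGroup n ℝ)
    {g : n → ℝ} {c : ℝ} (hg : ∀ m, |g m| ≤ c) (j k : n) :
    |(U * diagonal g * star U) j k| ≤ c := by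
  have hc : 0 ≤ c := (abs_nonneg _).trans (hg j)
  calc |(U * diagonal g * star U) j k| = |∑ m, U j m * g m * U k m| := by
        rw [Matrix.mul_apply]
        simp only [Matrix.mul_diagonal, Matrix.star_apply, star_trivial]
    _ ≤ ∑ m, |U j m| * |g m| * |U k m| :=
        (Finset.abs_sum_le_sum_abs _ _).trans_eq (by simp only [abs_mul])
    _ ≤ ∑ m, c * (|U j m| * |U k m|) := Finset.sum_le_sum fun m _ => by
        rw [mul_right_comm, mul_comm]
        exact mul_le_mul_of_nonneg_right (hg m) (by positivity)
    _ ≤ c := by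
        rw [← Finset.mul_sum]
        exact mul_le_of_le_one_right hc (sum_abs_mul_abs_le_one hU j k)

lemma mul_diagonal_mul_star_sub_one {U : Matrix n n ℝ} (hU : U ∈ unitaryGroup n ℝ) (g : n → ℝ) :
    U * diagonal g * star U - 1 = U * diagonal (g - 1) * star U := by
  have hdiag : diagonal (g - 1) = diagonal g - 1 := by
    rw [← diagonal_one]
    exact (diagonal_sub g _).symm
  rw [hdiag, mul_sub, sub_mul, mul_one, mem_unitaryGroup_iff.mp hU]

lemma matInvSqrt_eq {S : Matrix n n ℝ} (hS : S.PosDef) :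
    matInvSqrt S = hS.1.eigenvectorUnitary * diagonal (fun i => (√(hS.1.eigenvalues i))⁻¹) *
      star (hS.1.eigenvectorUnitary : Matrix n n ℝ) := by
  set U : Matrix n n ℝ := (hS.1.eigenvectorUnitary : Matrix n n ℝ)
  have hU : star U * U = 1 := mem_unitaryGroup_iff'.mp hS.1.eigenvectorUnitary.2
  have hdiag : diagonal (fun i => (√(hS.1.eigenvalues i))⁻¹) *
      diagonal (fun i => √(hS.1.eigenvalues i)) = 1 := by
    rw [diagonal_mul_diagonal, ← diagonal_one]
    exact congrArg diagonal
      (funext fun i => inv_mul_cancel₀ (Real.sqrt_pos.2 (hS.eigenvalues_pos i)).ne')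
  rw [matInvSqrt, dif_pos hS.posSemidef]
  -- `matInvSqrt` builds its `diagonal` with classical decidable equality
  rw [Subsingleton.elim (fun a b => Classical.propDecidable (a = b)) ‹DecidableEq n›]
  refine inv_eq_left_inv ?_
  calc U * diagonal (fun i => (√(hS.1.eigenvalues i))⁻¹) * star U *
        (U * diagonal (fun i => √(hS.1.eigenvalues i)) * star U)
      = U * (diagonal (fun i => (√(hS.1.eigenvalues i))⁻¹) * (star U * U) *
        diagonal (fun i => √(hS.1.eigenvalues i))) * star U := by simp only [Matrix.mul_assoc]
    _ = 1 := by
      rw [hU, Matrix.mul_one, hdiag, Matrix.mul_one,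
        mem_unitaryGroup_iff.mp hS.1.eigenvectorUnitary.2]

end Unitary

lemma abs_inv_sqrt_sub_one_le {x : ℝ} (hx : 1 ≤ x) : |(√x)⁻¹ - 1| ≤ x - 1 := by
  have hs : 1 ≤ √x := Real.one_le_sqrt.2 hx
  have hsx : √x ≤ x := by nlinarith [Real.sq_sqrt (zero_le_one.trans hx)]
  have hinv : √x * (√x)⁻¹ = 1 := mul_inv_cancel₀ (by positivity)
  rw [abs_sub_comm, abs_of_nonneg (sub_nonneg.2 (inv_le_one_of_one_le₀ hs))]
  nlinarith [inv_nonneg.2 (Real.sqrt_nonneg x)]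

theorem inv_sqrt_max_norm_bound_general
    (d r : ℕ) (Qb : Matrix (Fin d) (Fin r) ℝ) (omega : ℝ)
    (hQb : matMaxNorm Qb ≤ omega / Real.sqrt d)
    (hsmall : (r : ℝ) * omega ^ 2 < 1 / 2) :
    matMaxNorm (matInvSqrt (1 + Qbᵀ * Qb) - 1) ≤ (r : ℝ) * omega ^ 2 ∧
      matMaxNorm (matInvSqrt (1 + Qbᵀ * Qb)) ≤ 3 / 2 := by
  have hA : (1 + Qbᵀ * Qb - 1).PosSemidef := by
    simpa using posSemidef_conjTranspose_mul_self Qb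
  have hS : (1 + Qbᵀ * Qb).PosDef := by
    simpa using PosDef.one.add_posSemidef hA
  have htrace : (1 + Qbᵀ * Qb - 1).trace ≤ r * omega ^ 2 := by
    simpa using trace_transpose_mul_self_le_of_matMaxNorm_le (Q := Qb)
      (by rwa [Fintype.card_fin])
  have heig : ∀ i, |(√(hS.1.eigenvalues i))⁻¹ - 1| ≤ r * omega ^ 2 := fun i =>
    (abs_inv_sqrt_sub_one_le (hS.1.one_le_eigenvalues hA i)).trans <|
      (hS.1.eigenvalues_sub_one_le_trace hA i).trans htrace
  have hdev : matMaxNorm (matInvSqrt (1 + Qbᵀ * Qb) - 1) ≤ r * omega ^ 2 := by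
    rw [matInvSqrt_eq hS, mul_diagonal_mul_star_sub_one hS.1.eigenvectorUnitary.2]
    exact matMaxNorm_le (by positivity)
      (abs_mul_diagonal_mul_star_apply_le hS.1.eigenvectorUnitary.2 heig)
  refine ⟨hdev, ?_⟩
  calc matMaxNorm (matInvSqrt (1 + Qbᵀ * Qb))
      = matMaxNorm (matInvSqrt (1 + Qbᵀ * Qb) - 1 + 1) := by rw [sub_add_cancel]
    _ ≤ r * omega ^ 2 + 1 := (matMaxNorm_add_le _ _).trans (add_le_add hdev matMaxNorm_one_le)
    _ ≤ 3 / 2 := by linarith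

/-- Entrywise bounds on (I + Q̄ᵀQ̄)^{-1/2} (Lemma A.4 of Fan–Wang–Zhong). -/
theorem inv_sqrt_max_norm_bound
    (d r : ℕ) (Qb : Matrix (Fin d) (Fin r) ℝ) (omega : ℝ) (homega : 0 ≤ omega)
    (hQb : matMaxNorm Qb ≤ omega / Real.sqrt d)
    (hsmall : (r : ℝ) * omega ^ 2 < 1 / 2) :
    matMaxNorm (matInvSqrt (1 + Qbᵀ * Qb) - 1) ≤ (r : ℝ) * omega ^ 2 ∧
      matMaxNorm (matInvSqrt (1 + Qbᵀ * Qb)) ≤ 3 / 2 :=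
  inv_sqrt_max_norm_bound_general d r Qb omega hQb hsmall
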